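/- (Theorem 1, one iteration of Algorithm 1 decreases the objective.) Fix K ≥ 1, dimensions d₁,…,d_K, m, n, T ≥ 1, reals λ₁ ≥ 0, λ₂ ≥ 0, α ≥ 0, matrices Bᵏ ∈ ℝ^{d_k×m} and Xᵏ ∈ ℝ^{d_k×n} for k = 1,…,K, and fixed families A_l = (A_lᵏ)_{k=1}^K with A_lᵏ ∈ ℝ^{m×n} for l = 1,…,T. For a family W = (Wᵏ)_{k=1}^K with Wᵏ ∈ ℝ^{m×n}, let its i-th row norm be ρᵢ(W) = sqrt(Σ_{k=1}^K Σ_{j=1}^n ((Wᵏ)_{i,j})²), let L(W) = Σ_{k=1}^K ‖BᵏWᵏ − Xᵏ‖_F², and define the objective F(W) = L(W) + λ₁ Σ_{i=1}^m ρᵢ(W) + λ₂ Σ_{l=1}^T αˡ Σ_{i=1}^m ρᵢ(W − A_l). Let W_s be a family with ρᵢ(W_s) ≠ 0 and ρᵢ(W_s − A_l) ≠ 0 for all i and l, and define the surrogate G(W) = L(W) + λ₁ Σᵢ ρᵢ(W)²/(2ρᵢ(W_s)) + λ₂ Σ_{l=1}^T αˡ Σᵢ ρᵢ(W − A_l)²/(2ρᵢ(W_s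 − A_l)). If W_{s+1} satisfies G(W_{s+1}) ≤ G(W) for all families W (in particular G(W_{s+1}) ≤ G(W_s)), then F(W_{s+1}) ≤ F(W_s). -/
import Mathlib


open Finset

/-- The `i`-th row norm of a multimodal family of matrices: the Euclidean norm of the
concatenation of the `i`-th rows of all blocks. -/
noncomputable def famRho {K m n : ℕ} (W : Fin K → Matrix (Fin m) (Fin n) ℝ) (i : Fin m) : ℝ :=
  Real.sqrt (∑ k, ∑ j, (W k i j) ^ 2)

/-- The multimodal least-squares reconstruction term `Σ_k ‖BᵏWᵏ − Xᵏ‖_F²`. -/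
noncomputable def famLS {K m n : ℕ} {d : Fin K → ℕ}
    (B : ∀ k, Matrix (Fin (d k)) (Fin m) ℝ) (X : ∀ k, Matrix (Fin (d k)) (Fin n) ℝ)
    (W : Fin K → Matrix (Fin m) (Fin n) ℝ) : ℝ :=
  ∑ k, ∑ p, ∑ j, ((B k * W k - X k) p j) ^ 2

lemma famRho_nonneg {K m n : ℕ} (W : Fin K → Matrix (Fin m) (Fin n) ℝ) (i : Fin m) :
    0 ≤ famRho W i := Real.sqrt_nonneg _

lemma mm_key (a b : ℝ) (ha : 0 ≤ a) (hb : 0 < b) :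
    a ≤ a ^ 2 / (2 * b) + b / 2 := by
  have h : a ^ 2 / (2 * b) + b / 2 - a = (a - b) ^ 2 / (2 * b) := by
    field_simp; ring
  have h2 : 0 ≤ (a - b) ^ 2 / (2 * b) :=
    div_nonneg (sq_nonneg _) (by positivity)
  linarith

lemma mm_eq (b : ℝ) (hb : 0 < b) : b = b ^ 2 / (2 * b) + b / 2 := by
  field_simp; ring

/-- Theorem 1: one iteration of Algorithm 1 decreases the TRAC objective.
If `Wnext` minimizes the reweighted quadratic surrogate `G` built from `Ws`
(whose row norms `ρᵢ(Ws)` and `ρᵢ(Ws − A_l)` are all nonzero), then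
`F(Wnext) ≤ F(Ws)` for the objective `F`. -/
theorem alg1_decreases_objective
    (K m n T : ℕ) (hK : 1 ≤ K) (hT : 1 ≤ T)
    (d : Fin K → ℕ)
    (lam1 lam2 α : ℝ) (hlam1 : 0 ≤ lam1) (hlam2 : 0 ≤ lam2) (hα : 0 ≤ α)
    (B : ∀ k, Matrix (Fin (d k)) (Fin m) ℝ) (X : ∀ k, Matrix (Fin (d k)) (Fin n) ℝ)
    (A : Fin T → Fin K → Matrix (Fin m) (Fin n) ℝ)
    (F : (Fin K → Matrix (Fin m) (Fin n) ℝ) → ℝ)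
    (hF : ∀ W, F W = famLS B X W + lam1 * ∑ i, famRho W i +
        lam2 * ∑ l : Fin T, α ^ ((l : ℕ) + 1) *
          ∑ i, famRho (fun k => W k - A l k) i)
    (Ws : Fin K → Matrix (Fin m) (Fin n) ℝ)
    (hWs : ∀ i, famRho Ws i ≠ 0)
    (hWsA : ∀ (l : Fin T) (i : Fin m), famRho (fun k => Ws k - A l k) i ≠ 0)
    (G : (Fin K → Matrix (Fin m) (Fin n) ℝ) → ℝ)
    (hG : ∀ W, G W = famLS B X W +
        lam1 * ∑ i, (famRho W i) ^ 2 / (2 * famRho Ws i) +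
        lam2 * ∑ l : Fin T, α ^ ((l : ℕ) + 1) *
          ∑ i, (famRho (fun k => W k - A l k) i) ^ 2 /
            (2 * famRho (fun k => Ws k - A l k) i))
    (Wnext : Fin K → Matrix (Fin m) (Fin n) ℝ)
    (hmin : ∀ W, G Wnext ≤ G W) :
    F Wnext ≤ F Ws := by
  have hWsPos : ∀ i, 0 < famRho Ws i := fun i =>
    lt_of_le_of_ne (famRho_nonneg _ _) (Ne.symm (hWs i))
  have hWsAPos : ∀ l i, 0 < famRho (fun k => Ws k - A l k) i := fun l i =>
    lt_of_le_of_ne (famRho_nonneg _ _) (Ne.symm (hWsA l i))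
  set C : ℝ := lam1 * ∑ i, famRho Ws i / 2 +
      lam2 * ∑ l : Fin T, α ^ ((l : ℕ) + 1) *
        ∑ i, famRho (fun k => Ws k - A l k) i / 2 with hC
  -- F W ≤ G W + C for every W
  have hle : ∀ W, F W ≤ G W + C := by
    intro W
    rw [hF, hG, hC]
    have h1 : ∑ i, famRho W i ≤
        (∑ i, (famRho W i) ^ 2 / (2 * famRho Ws i)) + ∑ i, famRho Ws i / 2 := by
      rw [← Finset.sum_add_distrib]
      exact Finset.sum_le_sum fun i _ => mm_key _ _ (famRho_nonneg _ _) (hWsPos i)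
    have h2 : (∑ l : Fin T, α ^ ((l : ℕ) + 1) *
          ∑ i, famRho (fun k => W k - A l k) i) ≤
        (∑ l : Fin T, α ^ ((l : ℕ) + 1) *
          ∑ i, (famRho (fun k => W k - A l k) i) ^ 2 /
            (2 * famRho (fun k => Ws k - A l k) i)) +
        ∑ l : Fin T, α ^ ((l : ℕ) + 1) *
          ∑ i, famRho (fun k => Ws k - A l k) i / 2 := by
      rw [← Finset.sum_add_distrib]
      refine Finset.sum_le_sum fun l _ => ?_
      rw [← mul_add]
      refine mul_le_mul_of_nonneg_left ?_ (pow_nonneg hα _)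
      rw [← Finset.sum_add_distrib]
      exact Finset.sum_le_sum fun i _ => mm_key _ _ (famRho_nonneg _ _) (hWsAPos l i)
    have h1' := mul_le_mul_of_nonneg_left h1 hlam1
    have h2' := mul_le_mul_of_nonneg_left h2 hlam2
    rw [mul_add] at h1' h2'
    linarith
  -- F Ws = G Ws + C
  have heq : F Ws = G Ws + C := by
    rw [hF, hG, hC]
    have h1 : ∑ i, famRho Ws i =
        (∑ i, (famRho Ws i) ^ 2 / (2 * famRho Ws i)) + ∑ i, famRho Ws i / 2 := by
      rw [← Finset.sum_add_distrib]
      exact Finset.sum_congr rfl fun i _ => mm_eq _ (hWsPos i)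
    have h2 : (∑ l : Fin T, α ^ ((l : ℕ) + 1) *
          ∑ i, famRho (fun k => Ws k - A l k) i) =
        (∑ l : Fin T, α ^ ((l : ℕ) + 1) *
          ∑ i, (famRho (fun k => Ws k - A l k) i) ^ 2 /
            (2 * famRho (fun k => Ws k - A l k) i)) +
        ∑ l : Fin T, α ^ ((l : ℕ) + 1) *
          ∑ i, famRho (fun k => Ws k - A l k) i / 2 := by
      rw [← Finset.sum_add_distrib]
      refine Finset.sum_congr rfl fun l _ => ?_
      rw [← mul_add, ← Finset.sum_add_distrib]
      exact congrArg _ (Finset.sum_congr rfl fun i _ => mm_eq _ (hWsAPos l i))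
    rw [h1, h2]; ring
  calc F Wnext ≤ G Wnext + C := hle Wnext
    _ ≤ G Ws + C := by linarith [hmin Ws]
    _ = F Ws := heq.symm
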